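/- arXiv:2111.05590 — 3 statements merged into one kernel-verified Lean document; each statement's English description precedes it below -/
import Mathlib

section
/- At v = 0, the derivative of the epidemic threshold c̄(v) with respect to v is negative if and only if γ_t/γ_q > p_q/(1-p_q), assuming (1-η)(1-σ)λ > 0, γ_q > 0, p_q ∈ (0,1). -/
/-- At v = 0, the derivative of the epidemic threshold is negative iff
γ_t/γ_q > p_q/(1-p_q). -/
theorem cbar_deriv_at_zero_neg_iff
    (η σ lam γt γq pq β : ℝ)
    (hη : 0 ≤ η) (hη1 : η < 1) (hσ : 0 ≤ σ) (hσ1 : σ < 1) (hlam : lam > 0)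
    (hγt : 0 ≤ γt) (hγq : γq > 0) (hpq0 : 0 < pq) (hpq1 : pq < 1) :
    (deriv (fun v : ℝ =>
        2 * (1 - η) * (1 - σ) * lam * (1 - γt * v) * (1 - pq * (1 - γq * v)) - β) 0 < 0
      ↔ γt / γq > pq / (1 - pq)) := by
  set C : ℝ := 2 * (1 - η) * (1 - σ) * lam with hC
  have hCpos : 0 < C := by
    have h1 : (0:ℝ) < 1 - η := by linarith
    have h2 : (0:ℝ) < 1 - σ := by linarith
    positivity
  have h1 : HasDerivAt (fun v : ℝ => 1 - γt * v) (-γt) 0 := by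
    simpa using ((hasDerivAt_id (0:ℝ)).const_mul γt).const_sub 1
  have h2 : HasDerivAt (fun v : ℝ => 1 - pq * (1 - γq * v)) (pq * γq) 0 := by
    have := (((hasDerivAt_id (0:ℝ)).const_mul γq).const_sub 1).const_mul pq
    have := this.const_sub 1
    simpa using this.congr_deriv (by ring)
  have h3 : HasDerivAt (fun v : ℝ =>
      C * (1 - γt * v) * (1 - pq * (1 - γq * v)) - β)
      (C * (pq * γq) - C * γt * (1 - pq)) 0 := by
    have := ((h1.const_mul C).mul h2).sub_const β
    simp only [mul_zero, sub_zero, mul_one] at this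
    refine this.congr_deriv ?_
    ring
  have hd : deriv (fun v : ℝ =>
      2 * (1 - η) * (1 - σ) * lam * (1 - γt * v) * (1 - pq * (1 - γq * v)) - β) 0
      = C * (pq * γq) - C * γt * (1 - pq) := h3.deriv
  rw [hd]
  have hpq' : (0:ℝ) < 1 - pq := by linarith
  constructor
  · intro h
    rw [gt_iff_lt, div_lt_div_iff₀ hpq' hγq]
    nlinarith
  · intro h
    rw [gt_iff_lt, div_lt_div_iff₀ hpq' hγq] at h
    nlinarith
end

section
/- For the planar system in (s, i) given by ds/dt = -a·s·i + β·i + β(1 - s - i), di/dt = a(1-p)s·i - (β+c)i, the Dulac function φ(s, i) = 1/(s·i) satisfies ∂(φ·ds/dt)/∂s + ∂(φ·di/dt)/∂i = -(β/s²)(1 + (1-i)/i) < 0 for all s, i > 0. -/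
/-- Dulac function computation: the divergence of φ·F is -(β/s²)(1+(1-i)/i) < 0
for all s, i > 0, with φ(s,i) = 1/(s·i). -/
theorem dulac_negative_divergence
    (a p β c : ℝ) (ha : a > 0) (hp0 : 0 ≤ p) (hp1 : p ≤ 1) (hβ : β > 0) (hc : 0 ≤ c) :
    ∀ s i : ℝ, s > 0 → i > 0 →
      deriv (fun s' : ℝ => (1 / (s' * i)) * (-a * s' * i + β * i + β * (1 - s' - i))) s +
        deriv (fun i' : ℝ => (1 / (s * i')) * (a * (1 - p) * s * i' - (β + c) * i')) i
        = -(β / s ^ 2) * (1 + (1 - i) / i) ∧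
      -(β / s ^ 2) * (1 + (1 - i) / i) < 0 := by
  intro s i hs hi
  have hsne : s ≠ 0 := ne_of_gt hs
  have hine : i ≠ 0 := ne_of_gt hi
  -- first derivative
  have h1 : deriv (fun s' : ℝ => (1 / (s' * i)) * (-a * s' * i + β * i + β * (1 - s' - i))) s
      = -(β / i) / s ^ 2 := by
    have heq : (fun s' : ℝ => (1 / (s' * i)) * (-a * s' * i + β * i + β * (1 - s' - i)))
        =ᶠ[nhds s] (fun s' : ℝ => (-a - β / i) + (β / i) * s'⁻¹) := by
      filter_upwards [eventually_ne_nhds hsne] with x hx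
      field_simp
      ring
    rw [heq.deriv_eq]
    have : deriv (fun s' : ℝ => (-a - β / i) + (β / i) * s'⁻¹) s
        = (β / i) * -(s ^ 2)⁻¹ := by
      apply HasDerivAt.deriv
      exact ((hasDerivAt_inv hsne).const_mul (β / i)).const_add _
    rw [this]
    field_simp
  have h2 : deriv (fun i' : ℝ => (1 / (s * i')) * (a * (1 - p) * s * i' - (β + c) * i')) i
      = 0 := by
    have heq : (fun i' : ℝ => (1 / (s * i')) * (a * (1 - p) * s * i' - (β + c) * i'))
        =ᶠ[nhds i] (fun _ : ℝ => a * (1 - p) - (β + c) / s) := by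
      filter_upwards [eventually_ne_nhds hine] with x hx
      field_simp
    rw [heq.deriv_eq, deriv_const]
  constructor
  · rw [h1, h2]
    field_simp
    ring
  · have hpos : 1 + (1 - i) / i = 1 / i := by field_simp; ring
    rw [hpos]
    have h3 : β / s ^ 2 > 0 := div_pos hβ (by positivity)
    have h4 : β / s ^ 2 * (1 / i) > 0 := mul_pos h3 (by positivity)
    linarith
end

section
/- If a(1-p) ≤ β + c (i.e., c ≥ c̄), then the disease-free equilibrium is the unique equilibrium of the planar system ds/dt = -a·s·i + β·i + β(1-s-i), di/dt = a(1-p)s·i - (β+c)i in the region {(s,i) : s ≥ 0, i ≥ 0, s + i ≤ 1}. -/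
/-- Above (or at) the threshold, (1,0) is the unique equilibrium of the planar system
in the triangle {s ≥ 0, i ≥ 0, s + i ≤ 1}. -/
theorem disease_free_unique_equilibrium
    (a p β c : ℝ) (ha : a > 0) (hp0 : 0 ≤ p) (hp1 : p < 1) (hβ : β > 0) (hc : 0 ≤ c)
    (hthr : a * (1 - p) ≤ β + c) :
    ∀ s i : ℝ, 0 ≤ s → 0 ≤ i → s + i ≤ 1 →
      (-a * s * i + β * i + β * (1 - s - i) = 0 ∧
       a * (1 - p) * s * i - (β + c) * i = 0) →
      s = 1 ∧ i = 0 := by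
  intro s i hs hi hsi ⟨h1, h2⟩
  rcases eq_or_lt_of_le hi with hi0 | hi0
  · -- i = 0
    have hi0 : i = 0 := hi0.symm
    subst hi0
    constructor
    · nlinarith
    · rfl
  · -- i > 0 : contradiction
    exfalso
    have hfac : a * (1 - p) * s = β + c := by
      have : (a * (1 - p) * s - (β + c)) * i = 0 := by ring_nf; nlinarith [h2]
      have := (mul_eq_zero.mp this).resolve_right (ne_of_gt hi0)
      linarith
    have hap : 0 < a * (1 - p) := by nlinarith
    have hs1 : 1 ≤ s := by nlinarith
    nlinarith
end
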